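/- Let f(t) = t + t^2 + (3/2)t^3 + (5/2)t^4 + (175/40)t^5 + ... be any formal power series over ℚ whose first five coefficients are a₁=1, a₂=1, a₃=3/2, a₄=5/2, a₅=35/8 (i.e., f_P(t) with dim P(n)/n! given by dimensions (1,2,9,60,525)). Then the compositional inverse of −f(−t) has negative coefficient at t^5, namely the coefficient of t^5 is −15/120 = −1/8. -/

import Mathlib

/-!
Write `g(t) = -f(-t)`, so that `g ∘ h = t` and `g = t - t² + 3/2 t³ - 5/2 t⁴ + 35/8 t⁵ + O(t⁶)`.
Since the linear coefficient of `g` is a unit, compositional inverses are unique modulo `t^N`: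
if `h ≡ q (mod t^n)` with `h, q ∈ (t)`, then `h^k ≡ q^k (mod t^(n+1))` for `k ≥ 2`, so modulo
`t^(n+1)` the difference `g ∘ h - g ∘ q` is `g₁ (h - q)`. It therefore suffices to check the
polynomial identity `g ∘ q ≡ t (mod t⁶)` for `q = t + t² + t³/2 - t⁵/8`, whose coefficient of `t⁵`
is `-1/8`.
-/

open PowerSeries

/-- Composition `f ∘ g` of formal power series (intended for `g` with zero constant
coefficient): the `n`-th coefficient is that of `∑_{k ≤ n} (coeff k f) · g^k`. -/
noncomputable def PowerSeries.comp {R : Type*} [CommRing R] (f g : PowerSeries R) :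
    PowerSeries R :=
  PowerSeries.mk fun n =>
    PowerSeries.coeff (R := R) n
      (∑ k ∈ Finset.range (n + 1), PowerSeries.C (R := R) (PowerSeries.coeff (R := R) k f) * g ^ k)

theorem pow_succ_dvd_pow_add_two_sub_pow_add_two {R : Type*} [CommRing R] {x a b : R} {n : ℕ}
    (ha : x ∣ a) (hb : x ∣ b) (hab : x ^ n ∣ a - b) (k : ℕ) :
    x ^ (n + 1) ∣ a ^ (k + 2) - b ^ (k + 2) := by
  have split : a ^ (k + 2) - b ^ (k + 2) =
      a ^ (k + 1) * (a - b) + (a ^ (k + 1) - b ^ (k + 1)) * b := by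
    ring
  rw [split, pow_succ]
  exact dvd_add (mul_comm (x ^ n) x ▸ mul_dvd_mul (dvd_pow ha k.succ_ne_zero) hab)
    (mul_dvd_mul (hab.trans (sub_dvd_pow_sub_pow a b _)) hb)

namespace PowerSeries

variable {R : Type*} [CommRing R] {h q : R⟦X⟧}

theorem coeff_pow_eq_zero_of_lt (hh : constantCoeff h = 0) {n k : ℕ} (hnk : n < k) :
    coeff n (h ^ k) = 0 :=
  X_pow_dvd_iff.mp (pow_dvd_pow_of_dvd (X_dvd_iff.mpr hh) k) n hnk

theorem X_pow_dvd_comp_sub_sum (g : R⟦X⟧) (hh : constantCoeff h = 0) (N : ℕ) :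
    X ^ N ∣ g.comp h - ∑ k ∈ Finset.range N, C (coeff k g) * h ^ k := by
  refine X_pow_dvd_iff.mpr fun d hd => ?_
  rw [map_sub, comp, coeff_mk, sub_eq_zero, map_sum, map_sum]
  refine Finset.sum_subset (by simpa using hd) fun k _ hk => ?_
  rw [coeff_C_mul, coeff_pow_eq_zero_of_lt hh (by simpa using hk), mul_zero]

theorem X_pow_dvd_sub_of_X_pow_dvd_comp_sub {g : R⟦X⟧} (hg : IsUnit (coeff 1 g))
    (hh : constantCoeff h = 0) (hq : constantCoeff q = 0) {N : ℕ}
    (hN : X ^ N ∣ g.comp h - g.comp q) : X ^ N ∣ h - q := by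
  induction N with
  | zero => simp
  | succ n ih =>
    have hn : X ^ n ∣ h - q := ih ((pow_dvd_pow X n.le_succ).trans hN)
    have hsum : X ^ (n + 1) ∣ ∑ k ∈ Finset.range (n + 2), C (coeff k g) * (h ^ k - q ^ k) := by
      have weaken := pow_dvd_pow (X : R⟦X⟧) (n + 1).le_succ
      have split : ∑ k ∈ Finset.range (n + 2), C (coeff k g) * (h ^ k - q ^ k) =
          (g.comp h - g.comp q) - (g.comp h - ∑ k ∈ Finset.range (n + 2), C (coeff k g) * h ^ k) +
            (g.comp q - ∑ k ∈ Finset.range (n + 2), C (coeff k g) * q ^ k) := by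
        simp only [mul_sub, Finset.sum_sub_distrib]
        ring
      rw [split]
      exact dvd_add (dvd_sub hN (weaken.trans (X_pow_dvd_comp_sub_sum g hh _)))
        (weaken.trans (X_pow_dvd_comp_sub_sum g hq _))
    rw [Finset.sum_range_succ', Finset.sum_range_succ'] at hsum
    simp only [pow_zero, sub_self, mul_zero, add_zero, zero_add, pow_one] at hsum
    have higher : X ^ (n + 1) ∣
        ∑ k ∈ Finset.range n, C (coeff (k + 2) g) * (h ^ (k + 2) - q ^ (k + 2)) :=
      Finset.dvd_sum fun k _ => dvd_mul_of_dvd_right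
        (pow_succ_dvd_pow_add_two_sub_pow_add_two (X_dvd_iff.mpr hh) (X_dvd_iff.mpr hq) hn k) _
    exact (hg.map C).dvd_mul_left.mp ((dvd_add_right higher).mp hsum)

end PowerSeries

namespace Polynomial

/-- The first five coefficients of the compositional inverse of
`t - t² + 3/2 t³ - 5/2 t⁴ + 35/8 t⁵`, found by solving the triangular system for them. -/
noncomputable def p2InvTrunc : ℚ[X] := X + X ^ 2 + C (1 / 2) * X ^ 3 - C (1 / 8) * X ^ 5

theorem X_pow_six_dvd_comp_p2InvTrunc_sub_X :
    X ^ 6 ∣ (X - X ^ 2 + C (3 / 2) * X ^ 3 - C (5 / 2) * X ^ 4 + C (35 / 8) * X ^ 5 : ℚ[X]).comp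
      p2InvTrunc - X := by
  refine ⟨C (63 / 8) + C (131 / 4) * X + C (541 / 8) * X ^ 2 + C (5505 / 64) * X ^ 3
    + C (4483 / 64) * X ^ 4 + C (3971 / 128) * X ^ 5 - C (381 / 128) * X ^ 6
    - C (487 / 32) * X ^ 7 - C (2705 / 256) * X ^ 8 - C (2553 / 1024) * X ^ 9
    + C (85 / 64) * X ^ 10 + C (2665 / 2048) * X ^ 11 + C (45 / 128) * X ^ 12
    - C (175 / 2048) * X ^ 13 - C (705 / 8192) * X ^ 14 - C (525 / 32768) * X ^ 15
    + C (175 / 32768) * X ^ 16 + C (175 / 65536) * X ^ 17 - C (35 / 262144) * X ^ 19,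
    funext fun r => ?_⟩
  -- `ring` does not see through `C`, so the identity is checked at every point of ℚ.
  simp only [p2InvTrunc, eval_sub, eval_comp, eval_add, eval_mul, eval_pow, eval_C, eval_X]
  ring

end Polynomial

theorem PowerSeries.constantCoeff_p2InvTrunc :
    constantCoeff (Polynomial.p2InvTrunc : ℚ⟦X⟧) = 0 := by
  simp [Polynomial.p2InvTrunc]

theorem PowerSeries.X_pow_six_dvd_comp_p2InvTrunc_sub_X {g : ℚ⟦X⟧} (h0 : coeff 0 g = 0)
    (h1 : coeff 1 g = 1) (h2 : coeff 2 g = -1) (h3 : coeff 3 g = 3 / 2)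
    (h4 : coeff 4 g = -(5 / 2)) (h5 : coeff 5 g = 35 / 8) :
    X ^ 6 ∣ g.comp Polynomial.p2InvTrunc - X := by
  have htrunc := X_pow_dvd_comp_sub_sum g constantCoeff_p2InvTrunc 6
  simp only [Finset.sum_range_succ, Finset.sum_range_zero, h0, h1, h2, h3, h4, h5, map_zero,
    map_one, map_neg] at htrunc
  have hpoly := map_dvd Polynomial.coeToPowerSeries.ringHom
    Polynomial.X_pow_six_dvd_comp_p2InvTrunc_sub_X
  simp only [map_sub, map_add, map_mul, map_pow, Polynomial.coeToPowerSeries.ringHom_apply,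
    Polynomial.coe_X, Polynomial.coe_C, Polynomial.sub_comp, Polynomial.add_comp,
    Polynomial.mul_comp, Polynomial.C_comp, Polynomial.X_comp, Polynomial.pow_comp] at hpoly
  convert dvd_add htrunc hpoly using 1
  ring

/-- For any power series `f` with first five coefficients `1, 1, 3/2, 5/2, 35/8`
(the Hilbert series of the operad P₂), the compositional inverse of `-f(-t)` has
coefficient `-1/8` at `t^5`; in particular it has a negative coefficient, so by the
Ginzburg–Kapranov criterion P₂ is not Koszul. -/
theorem P2_not_Koszul_obstruction (f h : PowerSeries ℚ)
    (hf0 : constantCoeff (R := ℚ) f = 0)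
    (hf1 : coeff (R := ℚ) 1 f = 1) (hf2 : coeff (R := ℚ) 2 f = 1) (hf3 : coeff (R := ℚ) 3 f = 3 / 2)
    (hf4 : coeff (R := ℚ) 4 f = 5 / 2) (hf5 : coeff (R := ℚ) 5 f = 35 / 8)
    (hh0 : constantCoeff (R := ℚ) h = 0)
    (hinv : (-(rescale (-1) f)).comp h = X) :
    coeff (R := ℚ) 5 h = -(1 / 8) := by
  set g := -(rescale (-1) f)
  have hg (k : ℕ) : coeff k g = -((-1) ^ k * coeff k f) := by simp [g, coeff_rescale]
  have hgq : X ^ 6 ∣ g.comp Polynomial.p2InvTrunc - X :=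
    X_pow_six_dvd_comp_p2InvTrunc_sub_X (by simp [hg, hf0]) (by simp [hg, hf1])
      (by simp [hg, hf2]) (by norm_num [hg, hf3]) (by norm_num [hg, hf4]) (by norm_num [hg, hf5])
  have hhq : X ^ 6 ∣ h - (Polynomial.p2InvTrunc : ℚ⟦X⟧) :=
    X_pow_dvd_sub_of_X_pow_dvd_comp_sub (g := g) (by simp [hg, hf1]) hh0 constantCoeff_p2InvTrunc
      (by rwa [hinv, ← dvd_neg, neg_sub])
  have hcoeff := X_pow_dvd_iff.mp hhq 5 (by norm_num)
  rw [map_sub, sub_eq_zero, Polynomial.coeff_coe] at hcoeff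
  rw [hcoeff]
  simp [Polynomial.p2InvTrunc, Polynomial.coeff_X]
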